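/- Let S and A be finite nonempty sets, p : S × A × S → ℝ with p(s,a,·) a probability distribution on S for each (s,a), r : S × A → ℝ, t : S × A → ℝ with t(s,a) > 0 for all (s,a), and r* ∈ ℝ. Let f : ℝ^{S×A} → ℝ be Lipschitz continuous and SISTr with a pointwise scaling limit f∞ that is SISTr at the origin. Let Q := { q ∈ ℝ^{S×A} : q(s,a) = r(s,a) − t(s,a)·r* + Σ_{s'} p(s,a,s')·max_{a'} q(s',a') for all (s,a) } and Q_f := { q ∈ Q : f(q) = r* }. Assume: (a) Q is nonempty and connected; and (b) whenever (r̄, q) ∈ ℝ × ℝ^{S×A} satisfies q(s,a) = −t(s,a)·r̄ + Σ_{s'} p(s,a,s')·max_{a'} q(s',a') for all (s,a), then r̄ = 0 and q is a constant vector. Then Q_f is nonempty, compact, and connected, and the only q ∈ ℝ^{S×A} satisfying q(s,a) = −t(s,a)·f∞(q) + Σ_{s'} p(s,a,s')·max_{a'} q(s',a') for all (s,a) is q = 0. -/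

import Mathlib

/-- `g : ℝ^{S×A} → ℝ` is strictly increasing under scalar translation (SISTr)
at `q`. -/
def SISTrAt {I : Type} (g : (I → ℝ) → ℝ) (q : I → ℝ) : Prop :=
  StrictMono (fun c : ℝ => g (fun x => q x + c)) ∧
    Function.Surjective (fun c : ℝ => g (fun x => q x + c))

/-- `g` is SISTr if it is SISTr at every point. -/
def SISTr {I : Type} (g : (I → ℝ) → ℝ) : Prop :=
  ∀ q : I → ℝ, SISTrAt g q

open Finset in
/-- The solution set `Q` of the average-reward optimality equation. -/
def QSet {S A : Type} [Fintype S] [Fintype A]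
    (p : S → A → S → ℝ) (r t : S → A → ℝ) (rstar : ℝ) : Set (S × A → ℝ) :=
  {q | ∀ (s : S) (a : A),
    q (s, a) = r s a - t s a * rstar + ∑ s', p s a s' * (⨆ a' : A, q (s', a'))}

open Filter Topology

section Aux

variable {A : Type} [Fintype A] [Nonempty A]

lemma aux_iSup_add (v : A → ℝ) (c : ℝ) : (⨆ a, (v a + c)) = (⨆ a, v a) + c := by
  rw [← Finset.sup'_univ_eq_ciSup, ← Finset.sup'_univ_eq_ciSup]
  exact (Finset.comp_sup'_eq_sup'_comp _ (· + c) (fun x y => (max_add_add_right x y c).symm)).symm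

lemma aux_iSup_mul (v : A → ℝ) {k : ℝ} (hk : 0 ≤ k) : (⨆ a, (v a * k)) = (⨆ a, v a) * k := by
  rw [← Finset.sup'_univ_eq_ciSup, ← Finset.sup'_univ_eq_ciSup]
  exact (Finset.comp_sup'_eq_sup'_comp _ (· * k) (fun x y => max_mul_of_nonneg x y hk)).symm

lemma aux_cont_iSup {S : Type} (s' : S) :
    Continuous (fun q : S × A → ℝ => ⨆ a, q (s', a)) := by
  have h : (fun q : S × A → ℝ => ⨆ a, q (s', a))
      = fun q => Finset.univ.sup' Finset.univ_nonempty (fun a => q (s', a)) := by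
    funext q; rw [Finset.sup'_univ_eq_ciSup]
  rw [h]
  exact Continuous.finset_sup'_apply _ fun a _ => continuous_apply (s', a)

lemma aux_root_exists {I : Type} [Fintype I] (f : (I → ℝ) → ℝ) (hf : Continuous f)
    (hS : SISTr f) (y : ℝ) :
    ∃ c : (I → ℝ) → ℝ, Continuous c ∧ ∀ q, f (fun x => q x + c q) = y := by
  choose c hc using fun q => (hS q).2 y
  refine ⟨c, ?_, hc⟩
  rw [continuous_iff_continuousAt]
  intro q₀
  rw [Metric.continuousAt_iff]
  intro ε hε
  have hshift : ∀ d : ℝ, Continuous (fun q : I → ℝ => f (fun x => q x + d)) := by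
    intro d
    exact hf.comp (continuous_pi fun x => (continuous_apply x).add continuous_const)
  have h1 : f (fun x => q₀ x + (c q₀ - ε)) < y := by
    have := (hS q₀).1 (show c q₀ - ε < c q₀ by linarith)
    rwa [hc q₀] at this
  have h2 : y < f (fun x => q₀ x + (c q₀ + ε)) := by
    have := (hS q₀).1 (show c q₀ < c q₀ + ε by linarith)
    rwa [hc q₀] at this
  have hU1 : ∀ᶠ q in nhds q₀, f (fun x => q x + (c q₀ - ε)) < y :=
    (hshift (c q₀ - ε)).continuousAt.eventually_lt continuousAt_const h1
  have hU2 : ∀ᶠ q in nhds q₀, y < f (fun x => q x + (c q₀ + ε)) :=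
    continuousAt_const.eventually_lt (hshift (c q₀ + ε)).continuousAt h2
  obtain ⟨δ, hδ, hball⟩ := Metric.eventually_nhds_iff_ball.mp (hU1.and hU2)
  refine ⟨δ, hδ, fun {q} hq => ?_⟩
  obtain ⟨hq1, hq2⟩ := hball q (Metric.mem_ball.mpr hq)
  have hcy : f (fun x => q x + c q) = y := hc q
  have hlt1 : c q₀ - ε < c q := by
    have h := (hS q).1.lt_iff_lt (a := c q₀ - ε) (b := c q)
    rw [← hcy] at hq1
    exact h.mp hq1
  have hlt2 : c q < c q₀ + ε := by
    have h := (hS q).1.lt_iff_lt (a := c q) (b := c q₀ + ε)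
    rw [← hcy] at hq2
    exact h.mp hq2
  rw [Real.dist_eq, abs_lt]
  constructor <;> linarith

end Aux

open Finset in
/-- For a weakly communicating SMDP (expressed through the structural
assumptions (a) and (b)), the set `Q_f = {q ∈ Q : f(q) = r*}` is nonempty,
compact, and connected, and the zero-reward equation with `f∞` has only the
zero solution. -/
theorem statement13 {S A : Type} [Fintype S] [Fintype A] [Nonempty S] [Nonempty A]
    (p : S → A → S → ℝ) (hp0 : ∀ s a s', 0 ≤ p s a s')
    (hp1 : ∀ s a, ∑ s', p s a s' = 1)
    (r : S → A → ℝ) (t : S → A → ℝ) (ht : ∀ s a, 0 < t s a)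
    (rstar : ℝ)
    (f finf : (S × A → ℝ) → ℝ)
    (hfLip : ∃ L : ℝ, ∀ q q' : S × A → ℝ, |f q - f q'| ≤ L * ‖q - q'‖)
    (hfS : SISTr f)
    (hflim : ∀ q : S × A → ℝ,
      Filter.Tendsto (fun c : ℝ => f (c • q) / c) Filter.atTop (nhds (finf q)))
    (hfinf0 : SISTrAt finf 0)
    (hQconn : IsConnected (QSet p r t rstar))
    (hzero : ∀ (rbar : ℝ) (q : S × A → ℝ),
      (∀ (s : S) (a : A),
        q (s, a) = -(t s a) * rbar + ∑ s', p s a s' * (⨆ a' : A, q (s', a'))) →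
      rbar = 0 ∧ ∃ c : ℝ, q = fun _ => c) :
    ({q ∈ QSet p r t rstar | f q = rstar}).Nonempty ∧
    IsCompact {q ∈ QSet p r t rstar | f q = rstar} ∧
    IsConnected {q ∈ QSet p r t rstar | f q = rstar} ∧
    (∀ q : S × A → ℝ,
      (∀ (s : S) (a : A),
        q (s, a) = -(t s a) * finf q + ∑ s', p s a s' * (⨆ a' : A, q (s', a'))) →
      q = 0) := by
  classical
  obtain ⟨L₀, hL₀⟩ := hfLip
  have hL : ∀ q q' : S × A → ℝ, |f q - f q'| ≤ |L₀| * ‖q - q'‖ := fun q q' =>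
    (hL₀ q q').trans (mul_le_mul_of_nonneg_right (le_abs_self _) (norm_nonneg _))
  have hfc : Continuous f := by
    have hlip : LipschitzWith (Real.toNNReal |L₀|) f := by
      apply LipschitzWith.of_dist_le_mul
      intro x y
      rw [Real.dist_eq, dist_eq_norm, Real.coe_toNNReal _ (abs_nonneg _)]
      exact hL x y
    exact hlip.continuous
  -- Q is closed
  have hQclosed : IsClosed (QSet p r t rstar) := by
    have hrepr : QSet p r t rstar = ⋂ (s : S), ⋂ (a : A),
        {q : S × A → ℝ | q (s, a)
          = r s a - t s a * rstar + ∑ s', p s a s' * (⨆ a' : A, q (s', a'))} := by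
      ext q; simp [QSet, Set.mem_iInter]
    rw [hrepr]
    refine isClosed_iInter fun s => isClosed_iInter fun a =>
      isClosed_eq (continuous_apply _) ?_
    exact continuous_const.add
      (continuous_finset_sum _ fun s' _ => continuous_const.mul (aux_cont_iSup s'))
  -- translation invariance of Q
  have hshiftQ : ∀ (c : ℝ), ∀ q ∈ QSet p r t rstar,
      (fun x => q x + c) ∈ QSet p r t rstar := by
    intro c q hq s a
    have hsup : ∀ s' : S, (⨆ a' : A, (q (s', a') + c)) = (⨆ a' : A, q (s', a')) + c :=
      fun s' => aux_iSup_add _ c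
    simp only [hsup]
    have hsum : ∑ s', p s a s' * ((⨆ a' : A, q (s', a')) + c)
        = (∑ s', p s a s' * (⨆ a' : A, q (s', a'))) + c := by
      simp only [mul_add]
      rw [Finset.sum_add_distrib, ← Finset.sum_mul, hp1 s a, one_mul]
    rw [hsum, hq s a]
    ring
  -- the root map
  obtain ⟨cmap, hcmapc, hcmap⟩ := aux_root_exists f hfc hfS rstar
  set Φ : (S × A → ℝ) → (S × A → ℝ) := fun q => fun x => q x + cmap q with hΦ
  have hΦc : Continuous Φ := continuous_pi fun x => (continuous_apply x).add hcmapc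
  set Qf := {q ∈ QSet p r t rstar | f q = rstar} with hQfdef
  have himg : Qf = Φ '' (QSet p r t rstar) := by
    ext q
    constructor
    · rintro ⟨hqQ, hqf⟩
      refine ⟨q, hqQ, ?_⟩
      have h0 : cmap q = 0 := by
        apply (hfS q).1.injective
        show f (fun x => q x + cmap q) = f (fun x => q x + 0)
        rw [hcmap q]
        simp only [add_zero]
        exact hqf.symm
      rw [hΦ]
      funext x
      simp [h0]
    · rintro ⟨q₀, hq₀, rfl⟩
      exact ⟨hshiftQ _ _ hq₀, hcmap q₀⟩
  have hQfconn : IsConnected Qf := by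
    rw [himg]
    exact hQconn.image Φ hΦc.continuousOn
  have hQfne : Qf.Nonempty := hQfconn.nonempty
  have hQfclosed : IsClosed Qf := hQclosed.inter (isClosed_eq hfc continuous_const)
  -- basic facts about finf
  have hfinf_zero : finf (0 : S × A → ℝ) = 0 := by
    have h1 := hflim 0
    have h2 : Tendsto (fun c : ℝ => f (c • (0 : S × A → ℝ)) / c) atTop (nhds 0) := by
      simp only [smul_zero]
      exact Tendsto.div_atTop tendsto_const_nhds tendsto_id
    exact tendsto_nhds_unique h1 h2
  have hmono : StrictMono (fun c : ℝ => finf (fun _ : S × A => c)) := by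
    have heq : (fun c : ℝ => finf (fun x : S × A => (0 : S × A → ℝ) x + c))
        = fun c : ℝ => finf (fun _ : S × A => c) := by
      funext c
      congr 1
      funext x
      simp
    exact heq ▸ hfinf0.1
  have hconst0 : finf (fun _ : S × A => (0 : ℝ)) = 0 := by
    have h : (fun _ : S × A => (0 : ℝ)) = (0 : S × A → ℝ) := rfl
    rw [h, hfinf_zero]
  -- boundedness of Qf
  have hQfbdd : Bornology.IsBounded Qf := by
    by_contra hb
    rw [isBounded_iff_forall_norm_le] at hb
    push_neg at hb
    choose u hu hnu using fun n : ℕ => hb (n : ℝ)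
    have hpos : ∀ n : ℕ, 0 < ‖u n‖ := fun n => lt_of_le_of_lt (Nat.cast_nonneg n) (hnu n)
    set w : ℕ → (S × A → ℝ) := fun n => (‖u n‖)⁻¹ • u n with hw
    have hwmem : ∀ n, w n ∈ Metric.sphere (0 : S × A → ℝ) 1 := by
      intro n
      rw [mem_sphere_zero_iff_norm, hw]
      dsimp only
      rw [norm_smul, norm_inv, norm_norm, inv_mul_cancel₀ (hpos n).ne']
    obtain ⟨winf, hwinfmem, φ, hφmono, hφtend⟩ :=
      (isCompact_sphere (0 : S × A → ℝ) 1).tendsto_subseq hwmem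
    set cs : ℕ → ℝ := fun k => ‖u (φ k)‖ with hcs
    have hcpos : ∀ k, 0 < cs k := fun k => hpos (φ k)
    have hctend : Tendsto cs atTop atTop := by
      apply tendsto_atTop_mono (fun k => ?_) tendsto_natCast_atTop_atTop
      calc (k : ℝ) ≤ (φ k : ℝ) := Nat.cast_le.mpr hφmono.le_apply
        _ ≤ cs k := (hnu (φ k)).le
    -- the limit point satisfies the zero-reward equation
    have hweq : ∀ (s : S) (a : A),
        winf (s, a) = -(t s a) * 0 + ∑ s', p s a s' * (⨆ a' : A, winf (s', a')) := by
      intro s a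
      have hLHS : Tendsto (fun k => (w ∘ φ) k (s, a)) atTop (nhds (winf (s, a))) :=
        ((continuous_apply (s, a)).tendsto winf).comp hφtend
      have hid : ∀ k, (w ∘ φ) k (s, a)
          = (r s a - t s a * rstar) / cs k
            + ∑ s', p s a s' * ((⨆ a' : A, u (φ k) (s', a')) * (cs k)⁻¹) := by
        intro k
        have hu' := (hu (φ k)).1 s a
        have happ : (w ∘ φ) k (s, a) = (cs k)⁻¹ * u (φ k) (s, a) := rfl
        rw [happ, hu', mul_add, Finset.mul_sum]
        congr 1
        · rw [div_eq_inv_mul]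
        · exact Finset.sum_congr rfl fun s' _ => by ring
      have hsupw : ∀ k, ∀ s' : S,
          (⨆ a' : A, (w ∘ φ) k (s', a')) = (⨆ a' : A, u (φ k) (s', a')) * (cs k)⁻¹ := by
        intro k s'
        have h := aux_iSup_mul (fun a' => u (φ k) (s', a')) (inv_nonneg.mpr (hcpos k).le)
        rw [← h]
        congr 1
        funext a'
        show (cs k)⁻¹ * u (φ k) (s', a') = _
        ring
      set G : (S × A → ℝ) → ℝ :=
        fun q => ∑ s', p s a s' * (⨆ a' : A, q (s', a')) with hG
      have hGc : Continuous G :=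
        continuous_finset_sum _ fun s' _ => continuous_const.mul (aux_cont_iSup s')
      have hRHS : Tendsto (fun k => (r s a - t s a * rstar) / cs k + G ((w ∘ φ) k))
          atTop (nhds (0 + G winf)) :=
        (Tendsto.div_atTop tendsto_const_nhds hctend).add ((hGc.tendsto winf).comp hφtend)
      have hRHS' : Tendsto (fun k => (w ∘ φ) k (s, a)) atTop (nhds (0 + G winf)) := by
        refine hRHS.congr fun k => ?_
        rw [hid k]
        congr 1
        rw [hG]
        refine Finset.sum_congr rfl fun s' _ => by rw [hsupw k s']
      have hfin : winf (s, a) = 0 + G winf := tendsto_nhds_unique hLHS hRHS'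
      rw [hfin, hG]
      ring_nf
    obtain ⟨-, c₀, hc₀⟩ := hzero 0 winf hweq
    -- finf winf = 0
    have hsmul : ∀ k, cs k • w (φ k) = u (φ k) := by
      intro k
      rw [hw]
      dsimp only
      rw [smul_smul, mul_inv_cancel₀ (hcpos k).ne', one_smul]
    have hfr : ∀ k, f (cs k • w (φ k)) = rstar := fun k => by
      rw [hsmul k]; exact (hu (φ k)).2
    have h1 : Tendsto (fun k => f (cs k • winf) / cs k) atTop (nhds (finf winf)) :=
      (hflim winf).comp hctend
    have hnormtend : Tendsto (fun k => ‖winf - w (φ k)‖) atTop (nhds 0) := by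
      have h := hφtend.const_sub winf
      rw [sub_self] at h
      simpa using h.norm
    have h2 : Tendsto (fun k => f (cs k • winf) / cs k) atTop (nhds 0) := by
      apply squeeze_zero_norm (a := fun k => |L₀| * ‖winf - w (φ k)‖ + |rstar| / cs k)
      · intro k
        have hck := hcpos k
        have hd : |f (cs k • winf) - rstar| ≤ |L₀| * (cs k * ‖winf - w (φ k)‖) := by
          calc |f (cs k • winf) - rstar|
              = |f (cs k • winf) - f (cs k • w (φ k))| := by rw [hfr k]
            _ ≤ |L₀| * ‖cs k • winf - cs k • w (φ k)‖ := hL _ _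
            _ = |L₀| * (cs k * ‖winf - w (φ k)‖) := by
                rw [← smul_sub, norm_smul, Real.norm_eq_abs, abs_of_pos hck]
        have h3 : |f (cs k • winf)| ≤ |L₀| * (cs k * ‖winf - w (φ k)‖) + |rstar| := by
          calc |f (cs k • winf)| = |f (cs k • winf) - rstar + rstar| := by ring_nf
            _ ≤ |f (cs k • winf) - rstar| + |rstar| := abs_add_le _ _
            _ ≤ _ := add_le_add_left hd _
        rw [Real.norm_eq_abs, abs_div, abs_of_pos hck, div_le_iff₀ hck]
        calc |f (cs k • winf)| ≤ |L₀| * (cs k * ‖winf - w (φ k)‖) + |rstar| := h3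
          _ = (|L₀| * ‖winf - w (φ k)‖ + |rstar| / cs k) * cs k := by
              field_simp
      · have ha : Tendsto (fun k => |L₀| * ‖winf - w (φ k)‖) atTop (nhds 0) := by
          simpa using hnormtend.const_mul |L₀|
        have hb2 : Tendsto (fun k => |rstar| / cs k) atTop (nhds 0) :=
          Tendsto.div_atTop tendsto_const_nhds hctend
        simpa using ha.add hb2
    have hfw0 : finf winf = 0 := tendsto_nhds_unique h1 h2
    have hce : c₀ = 0 := by
      apply hmono.injective
      show finf (fun _ : S × A => c₀) = finf (fun _ : S × A => (0 : ℝ))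
      rw [← hc₀, hfw0, hconst0]
    have hn1 : ‖winf‖ = 1 := mem_sphere_zero_iff_norm.mp hwinfmem
    rw [hc₀, hce] at hn1
    have : (fun _ : S × A => (0 : ℝ)) = (0 : S × A → ℝ) := rfl
    rw [this, norm_zero] at hn1
    exact zero_ne_one hn1
  -- assemble
  have hcompact : IsCompact Qf := Metric.isCompact_of_isClosed_isBounded hQfclosed hQfbdd
  refine ⟨hQfne, hcompact, hQfconn, ?_⟩
  intro q hq
  obtain ⟨hfq0, c₀, hc₀⟩ := hzero (finf q) q hq
  have hce : c₀ = 0 := by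
    apply hmono.injective
    show finf (fun _ : S × A => c₀) = finf (fun _ : S × A => (0 : ℝ))
    rw [← hc₀, hfq0, hconst0]
  rw [hc₀, hce]
  rfl
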